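/- For every integer r ≥ 2 and every positive integer n divisible by 3r−1, there exists a K_{r+1}-free simple graph G on n vertices with minimum degree δ(G) = ((3r−4)/(3r−1))·n that is not r-colourable. (Such a graph is obtained from a partition V = A_1 ∪ … ∪ A_5 ∪ B_1 ∪ … ∪ B_{r−2} with |A_i| = n/(3r−1) and |B_j| = 3n/(3r−1), with all edges between A_i and A_{i+1} (indices modulo 5), all edges between each A_i and each B_j, and all edges between distinct B_j and B_{j'}.) Consequently, the constant (3r−4)/(3r−1) in the Andrásfai–Erdős–Sós theorem cannot be lowered. -/

import Mathlib

/-!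
Take `q = r - 2`, `n = (3r - 1)t`, and blow up the join `C₅ ∨ K_q`, replacing each cycle vertex
by `t` independent vertices and each clique vertex by `3t`. A clique of the blow-up meets at most
two cycle classes (as `C₅` is triangle-free), so it has at most `q + 2 = r` vertices. A cycle
vertex has degree `2t + 3qt` and a clique vertex `5t + 3(q - 1)t`; both equal `(3r - 4)t`.
In a proper colouring the `q` clique classes use `q` colours that no cycle vertex may use, and the
odd cycle needs three more, so `r` colours do not suffice.
-/

open scoped Classical

namespace SimpleGraph

variable {V W : Type*}

def join (G : SimpleGraph V) (H : SimpleGraph W) : SimpleGraph (V ⊕ W) :=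
  (G ⊕g H) ⊔ completeBipartiteGraph V W

section Join

variable {G : SimpleGraph V} {H : SimpleGraph W}

@[simp] theorem join_adj_inl_inl {v v' : V} : (G.join H).Adj (.inl v) (.inl v') ↔ G.Adj v v' := by
  simp [join]

@[simp] theorem join_adj_inr_inr {w w' : W} : (G.join H).Adj (.inr w) (.inr w') ↔ H.Adj w w' := by
  simp [join]

@[simp] theorem join_adj_inl_inr {v : V} {w : W} : (G.join H).Adj (.inl v) (.inr w) := by
  simp [join]

@[simp] theorem join_adj_inr_inl {v : V} {w : W} : (G.join H).Adj (.inr w) (.inl v) := by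
  simp [join]

theorem neighborFinset_join_inl [Fintype V] [Fintype W] [DecidableRel G.Adj] [DecidableRel H.Adj]
    (v : V) : (G.join H).neighborFinset (.inl v) = (G.neighborFinset v).disjSum Finset.univ := by
  ext (w | w) <;> simp

theorem neighborFinset_join_inr [Fintype V] [Fintype W] [DecidableRel G.Adj] [DecidableRel H.Adj]
    (w : W) : (G.join H).neighborFinset (.inr w) = Finset.univ.disjSum (H.neighborFinset w) := by
  ext (v | v) <;> simp

theorem CliqueFree.join [Fintype W] {a : ℕ} (h : G.CliqueFree a) (H : SimpleGraph W) :
    (G.join H).CliqueFree (a + Fintype.card W) := by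
  intro s hs
  have hleft : a ≤ s.toLeft.card := by
    have hright : s.toRight.card ≤ Fintype.card W := Finset.card_le_univ _
    have hsplit := Finset.card_toLeft_add_card_toRight (u := s)
    have hcard := hs.card_eq
    omega
  obtain ⟨u, hus, hu⟩ := Finset.exists_subset_card_eq hleft
  refine h u ⟨fun x hx y hy hxy => ?_, hu⟩
  have hx' := Finset.mem_toLeft.1 (hus hx)
  have hy' := Finset.mem_toLeft.1 (hus hy)
  simpa using hs.isClique hx' hy' (by simpa using hxy)

/-- The vertices of `completeGraph W` take `card W` distinct colours, none of which is then
available to `G`. -/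
theorem Colorable.of_join_completeGraph [Fintype W] {k : ℕ}
    (h : (G.join (completeGraph W)).Colorable (k + Fintype.card W)) : G.Colorable k := by
  obtain ⟨C⟩ := h
  set T : Finset (Fin (k + Fintype.card W)) := Finset.univ.image (C ∘ .inr)
  have hT : T.card = Fintype.card W :=
    Finset.card_image_of_injective _ fun w w' hww' => by
      by_contra hne
      exact C.valid (join_adj_inr_inr.2 hne) hww'
  have hfree (v : V) : C (.inl v) ∈ Tᶜ := by
    simpa [T] using fun w hw => C.valid join_adj_inr_inl hw
  have hcard : Fintype.card (Tᶜ : Finset _) = k := by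
    rw [Fintype.card_coe, Finset.card_compl, hT, Fintype.card_fin, Nat.add_sub_cancel]
  exact hcard ▸ (Coloring.mk (fun v => ⟨C (.inl v), hfree v⟩)
    fun hvv' hC => C.valid (join_adj_inl_inl.2 hvv') (congrArg Subtype.val hC)).colorable

end Join

theorem CliqueFree.of_hom {G : SimpleGraph V} {H : SimpleGraph W} {n : ℕ} (f : G →g H)
    (h : H.CliqueFree n) : G.CliqueFree n := by
  rw [cliqueFree_iff] at h ⊢
  exact ⟨fun c => h.elim ⟨f.comp c.toHom, Hom.injective_of_top_hom _⟩⟩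

def blowup (H : SimpleGraph W) (m : W → ℕ) : SimpleGraph (Σ w, Fin (m w)) :=
  H.comap Sigma.fst

section Blowup

variable {H : SimpleGraph W} {m : W → ℕ}

theorem CliqueFree.blowup {n : ℕ} (h : H.CliqueFree n) : (H.blowup m).CliqueFree n :=
  h.of_hom (Hom.comap _ _)

theorem Colorable.of_blowup (hm : ∀ w, 0 < m w) {k : ℕ} (h : (H.blowup m).Colorable k) :
    H.Colorable k :=
  h.of_hom ⟨fun w => ⟨w, ⟨0, hm w⟩⟩, id⟩

theorem degree_blowup [Fintype W] [DecidableRel H.Adj] (w : W) (i : Fin (m w)) :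
    (H.blowup m).degree ⟨w, i⟩ = ∑ w' ∈ H.neighborFinset w, m w' := by
  have hnbr : (H.blowup m).neighborFinset ⟨w, i⟩ =
      (H.neighborFinset w).sigma fun _ => Finset.univ := by
    ext ⟨w', j⟩
    rw [mem_neighborFinset]
    simp only [blowup, comap_adj, Finset.mem_sigma, mem_neighborFinset, Finset.mem_univ, and_true]
  rw [← card_neighborFinset_eq_degree, hnbr, Finset.card_sigma]
  simp only [Finset.card_univ, Fintype.card_fin]

end Blowup

theorem cycleGraph_five_cliqueFree_three : (cycleGraph 5).CliqueFree 3 := by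
  intro s hs
  obtain ⟨a, b, c, hab, hac, hbc, -⟩ := is3Clique_iff.1 hs
  rw [cycleGraph_adj] at hab hac hbc
  revert a b c
  decide

theorem cycleGraph_five_not_colorable_two : ¬ (cycleGraph 5).Colorable 2 := fun h => by
  have hle := h.chromaticNumber_le
  rw [chromaticNumber_cycleGraph_of_odd 5 (by norm_num) (by decide)] at hle
  norm_num at hle

end SimpleGraph

open SimpleGraph

def aesWeight (q t : ℕ) : Fin 5 ⊕ Fin q → ℕ :=
  Sum.elim (fun _ => t) fun _ => 3 * t

/-- With `q = r - 2`, the class of `inl i` is the paper's `A_i` and the class of `inr j` is `B_j`. -/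
def aesGraph (q t : ℕ) : SimpleGraph (Σ w, Fin (aesWeight q t w)) :=
  ((cycleGraph 5).join (completeGraph (Fin q))).blowup (aesWeight q t)

theorem card_aesGraph_vertices (q t : ℕ) :
    Fintype.card (Σ w, Fin (aesWeight q t w)) = (3 * q + 5) * t := by
  rw [Fintype.card_sigma, Fintype.sum_sum_type]
  simp only [Fintype.card_fin]
  simp only [aesWeight, Sum.elim_inl, Sum.elim_inr, Finset.sum_const, Finset.card_univ,
    Fintype.card_fin, smul_eq_mul]
  ring

theorem aesGraph_cliqueFree (q t : ℕ) : (aesGraph q t).CliqueFree (q + 3) := by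
  have h := (cycleGraph_five_cliqueFree_three.join (completeGraph (Fin q))).blowup
    (m := aesWeight q t)
  rwa [Fintype.card_fin, add_comm] at h

theorem aesGraph_not_colorable {q t : ℕ} (ht : 0 < t) : ¬ (aesGraph q t).Colorable (q + 2) := by
  intro h
  have hpos : ∀ w, 0 < aesWeight q t w := by rintro (a | c) <;> simp [aesWeight, ht]
  refine cycleGraph_five_not_colorable_two (Colorable.of_join_completeGraph (W := Fin q) ?_)
  simpa [add_comm] using h.of_blowup hpos

theorem degree_aesGraph (q t : ℕ) (x : Σ w, Fin (aesWeight q t w)) :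
    (aesGraph q t).degree x = (3 * q + 2) * t := by
  obtain ⟨a | c, i⟩ := x
  · rw [aesGraph, degree_blowup, neighborFinset_join_inl, Finset.sum_disjSum]
    simp only [aesWeight, Sum.elim_inl, Finset.sum_const, card_neighborFinset_eq_degree,
      cycleGraph_degree_three_le, smul_eq_mul, Sum.elim_inr, Finset.card_univ, Fintype.card_fin]
    ring
  · obtain ⟨q, rfl⟩ : ∃ q', q = q' + 1 := ⟨q - 1, by have := c.pos; omega⟩
    rw [aesGraph, degree_blowup, neighborFinset_join_inr, Finset.sum_disjSum]
    simp only [aesWeight, Sum.elim_inl, Finset.sum_const, Finset.card_univ, Fintype.card_fin,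
      smul_eq_mul, completeGraph_eq_top, neighborFinset_top, Sum.elim_inr, Finset.card_compl,
      Finset.card_singleton, add_tsub_cancel_right]
    ring

/-- Optimality of the Andrásfai–Erdős–Sós theorem: for every `r ≥ 2` and `n > 0`
divisible by `3r - 1` there is a `K_{r+1}`-free simple graph on `n` vertices with minimum
degree exactly `((3r-4)/(3r-1))·n` that is not `r`-colourable. -/
theorem aes_optimal (r n : ℕ) (hr : 2 ≤ r) (hn : 0 < n) (hdvd : 3 * r - 1 ∣ n) :
    ∃ G : SimpleGraph (Fin n),
      G.CliqueFree (r + 1) ∧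
      (∀ v : Fin n, (3 * (r : ℝ) - 4) / (3 * (r : ℝ) - 1) * (n : ℝ) ≤ G.degree v) ∧
      (∃ v : Fin n, (G.degree v : ℝ) = (3 * (r : ℝ) - 4) / (3 * (r : ℝ) - 1) * (n : ℝ)) ∧
      ¬ G.Colorable r := by
  obtain ⟨q, rfl⟩ : ∃ q, r = q + 2 := ⟨r - 2, by omega⟩
  obtain ⟨t, rfl⟩ : 3 * q + 5 ∣ n := by rwa [show 3 * (q + 2) - 1 = 3 * q + 5 by omega] at hdvd
  have ht : 0 < t := Nat.pos_of_mul_pos_left hn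
  let φ := (aesGraph q t).overFinIso (card_aesGraph_vertices q t)
  have hdeg (v : Fin ((3 * q + 5) * t)) :
      ((aesGraph q t).overFin (card_aesGraph_vertices q t)).degree v =
      (3 * ((q + 2 : ℕ) : ℝ) - 4) / (3 * ((q + 2 : ℕ) : ℝ) - 1) * ((3 * q + 5) * t : ℕ) := by
    have hden : 3 * ((q + 2 : ℕ) : ℝ) - 1 = 3 * q + 5 := by push_cast; ring
    rw [← φ.apply_symm_apply v, φ.degree_eq, degree_aesGraph, hden]
    field_simp
    push_cast
    ring
  exact ⟨_, (aesGraph_cliqueFree q t).of_hom φ.symm, fun v => (hdeg v).ge, ⟨⟨0, hn⟩, hdeg _⟩,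
    fun h => aesGraph_not_colorable ht (h.of_hom φ)⟩
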